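/- arXiv:1703.04307 — 3 statements merged into one kernel-verified Lean document; each statement's English description precedes it below -/
import Mathlib

section
/- Under the edge-addition transition model, for every node i and horizon T, the set function S ↦ h_i^T(S) (truncated hitting time of the target n) is supermodular: for S₁ ⊆ S₂ ⊆ V and s ∈ V \ S₂, h_i^T(S₁ ∪ {s}) − h_i^T(S₁) ≤ h_i^T(S₂ ∪ {s}) − h_i^T(S₂). -/
open Finset

variable {V : Type*}

/-- Edge-addition transition kernel on `Option V`, where `none` is the target node `n`.
For `i ∈ S`, node `i` gets an extra edge of weight `wc` to the target. -/
noncomputable def ker [Fintype V] [DecidableEq V] (w : V → V → ℝ) (wc : ℝ) (S : Finset V) :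
    Option V → Option V → ℝ
  | some i, some k => if i ∈ S then w i k / (wc + ∑ j, w i j) else w i k / (∑ j, w i j)
  | some i, none => if i ∈ S then wc / (wc + ∑ j, w i j) else 0
  | none, none => 1
  | none, some _ => 0

/-- Truncated absorbing probability of the target (`none`) under the edge-addition model. -/
noncomputable def AP [Fintype V] [DecidableEq V] (w : V → V → ℝ) (wc : ℝ) (S : Finset V) :
    ℕ → Option V → ℝ
  | 0, x => if x = none then 1 else 0
  | _ + 1, none => 1
  | t + 1, some i => ∑ k, ker w wc S (some i) k * AP w wc S t k

/-- Truncated hitting time of the target (`none`) under the edge-addition model. -/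
noncomputable def HT [Fintype V] [DecidableEq V] (w : V → V → ℝ) (wc : ℝ) (S : Finset V) :
    ℕ → Option V → ℝ
  | 0, _ => 0
  | _ + 1, none => 0
  | t + 1, some i => 1 + ∑ k, ker w wc S (some i) k * HT w wc S t k

lemma HT_none_eq [Fintype V] [DecidableEq V] (w : V → V → ℝ) (wc : ℝ) (S : Finset V) :
    ∀ T, HT w wc S T none = 0
  | 0 => rfl
  | (_ + 1) => rfl

lemma ker_nonneg [Fintype V] [DecidableEq V] (w : V → V → ℝ) (wc : ℝ)
    (hw : ∀ i j, 0 < w i j) (hwc : 0 < wc) (hd : ∀ i, 0 < ∑ j, w i j)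
    (S : Finset V) : ∀ x y, 0 ≤ ker w wc S x y := by
  intro x y
  match x, y with
  | none, none => norm_num [ker]
  | none, some j => norm_num [ker]
  | some i, none =>
    simp only [ker]
    split
    · exact div_nonneg hwc.le (by linarith [hd i])
    · exact le_refl 0
  | some i, some j =>
    simp only [ker]
    split
    · exact div_nonneg (hw i j).le (by linarith [hd i])
    · exact div_nonneg (hw i j).le (hd i).le

lemma HT_succ [Fintype V] [DecidableEq V] (w : V → V → ℝ) (wc : ℝ) (S : Finset V) (t : ℕ) (i : V) :
    HT w wc S (t+1) (some i) = 1 + ∑ j : V, ker w wc S (some i) (some j) * HT w wc S t (some j) := by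
  show 1 + ∑ k : Option V, ker w wc S (some i) k * HT w wc S t k = _
  rw [Fintype.sum_option, HT_none_eq, mul_zero, zero_add]

lemma HT_nonneg [Fintype V] [DecidableEq V] (w : V → V → ℝ) (wc : ℝ)
    (hw : ∀ i j, 0 < w i j) (hwc : 0 < wc) (hd : ∀ i, 0 < ∑ j, w i j)
    (S : Finset V) : ∀ T x, 0 ≤ HT w wc S T x := by
  intro T
  induction T with
  | zero => intro x; exact le_refl 0
  | succ t ih =>
    intro x
    match x with
    | none => exact le_refl 0
    | some i =>
      show (0:ℝ) ≤ 1 + ∑ k, ker w wc S (some i) k * HT w wc S t k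
      have : 0 ≤ ∑ k, ker w wc S (some i) k * HT w wc S t k :=
        Finset.sum_nonneg fun k _ => mul_nonneg (ker_nonneg w wc hw hwc hd S _ k) (ih k)
      linarith

lemma ker_anti [Fintype V] [DecidableEq V] (w : V → V → ℝ) (wc : ℝ)
    (hw : ∀ i j, 0 < w i j) (hwc : 0 < wc) (hd : ∀ i, 0 < ∑ j, w i j)
    {S S' : Finset V} (hS : S ⊆ S') (i j : V) :
    ker w wc S' (some i) (some j) ≤ ker w wc S (some i) (some j) := by
  simp only [ker]
  by_cases h : i ∈ S
  · rw [if_pos h, if_pos (hS h)]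
  · rw [if_neg h]
    by_cases h' : i ∈ S'
    · rw [if_pos h']
      gcongr
      · exact (hw i j).le
      · exact hd i
      · linarith
    · rw [if_neg h']

lemma HT_anti [Fintype V] [DecidableEq V] (w : V → V → ℝ) (wc : ℝ)
    (hw : ∀ i j, 0 < w i j) (hwc : 0 < wc) (hd : ∀ i, 0 < ∑ j, w i j)
    {S S' : Finset V} (hS : S ⊆ S') : ∀ T x, HT w wc S' T x ≤ HT w wc S T x := by
  intro T
  induction T with
  | zero => intro x; exact le_refl 0
  | succ t ih =>
    intro x
    match x with
    | none => exact le_refl 0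
    | some i =>
      show 1 + ∑ k, ker w wc S' (some i) k * HT w wc S' t k ≤
           1 + ∑ k, ker w wc S (some i) k * HT w wc S t k
      have h1 : ∑ k, ker w wc S' (some i) k * HT w wc S' t k ≤
          ∑ k, ker w wc S' (some i) k * HT w wc S t k :=
        Finset.sum_le_sum fun k _ =>
          mul_le_mul_of_nonneg_left (ih k) (ker_nonneg w wc hw hwc hd S' _ k)
      have h2 : ∑ k, ker w wc S' (some i) k * HT w wc S t k ≤
          ∑ k, ker w wc S (some i) k * HT w wc S t k := by
        apply Finset.sum_le_sum
        intro k _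
        match k with
        | none => rw [HT_none_eq, mul_zero, mul_zero]
        | some j =>
          exact mul_le_mul_of_nonneg_right (ker_anti w wc hw hwc hd hS i j)
            (HT_nonneg w wc hw hwc hd S t (some j))
      linarith

/-- Under the edge-addition transition model, the truncated hitting time
`S ↦ h_i^T(S)` of the target is a supermodular set function. -/
theorem HT_supermodular [Fintype V] [DecidableEq V] (w : V → V → ℝ) (wc : ℝ)
    (hw : ∀ i j, 0 < w i j) (hwc : 0 < wc) (hd : ∀ i, 0 < ∑ j, w i j)
    (S₁ S₂ : Finset V) (hS : S₁ ⊆ S₂) (s : V) (hs : s ∉ S₂) :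
    ∀ (T : ℕ) (i : V),
      HT w wc (insert s S₁) T (some i) - HT w wc S₁ T (some i) ≤
        HT w wc (insert s S₂) T (some i) - HT w wc S₂ T (some i) := by
  intro T
  induction T with
  | zero => intro i; show (0:ℝ) - 0 ≤ 0 - 0; norm_num
  | succ t ih =>
    intro i
    rw [HT_succ, HT_succ, HT_succ, HT_succ]
    have hdi := hd i
    have hwdi : 0 < wc + ∑ j, w i j := by linarith
    have key :
        (∑ j : V, ker w wc (insert s S₁) (some i) (some j) * HT w wc (insert s S₁) t (some j)) -
          (∑ j : V, ker w wc S₁ (some i) (some j) * HT w wc S₁ t (some j)) ≤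
        (∑ j : V, ker w wc (insert s S₂) (some i) (some j) * HT w wc (insert s S₂) t (some j)) -
          (∑ j : V, ker w wc S₂ (some i) (some j) * HT w wc S₂ t (some j)) := by
      rw [← Finset.sum_sub_distrib, ← Finset.sum_sub_distrib]
      apply Finset.sum_le_sum
      intro j _
      have hc' : (0:ℝ) ≤ w i j / (wc + ∑ l, w i l) := div_nonneg (hw i j).le hwdi.le
      have hc : (0:ℝ) ≤ w i j / (∑ l, w i l) := div_nonneg (hw i j).le hdi.le
      have hcc : w i j / (wc + ∑ l, w i l) ≤ w i j / (∑ l, w i l) := by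
        gcongr
        · exact (hw i j).le
        · linarith
      by_cases his : i = s
      · -- i = s : in both inserted sets, in neither base set
        subst his
        have h1 : i ∉ S₁ := fun h => hs (hS h)
        have hA : i ∈ insert i S₁ := Finset.mem_insert_self i S₁
        have hB : i ∈ insert i S₂ := Finset.mem_insert_self i S₂
        simp only [ker, if_pos hA, if_pos hB, if_neg h1, if_neg hs]
        have hmul1 := mul_le_mul_of_nonneg_left (ih j) hc'
        have hmono : HT w wc S₂ t (some j) ≤ HT w wc S₁ t (some j) :=
          HT_anti w wc hw hwc hd hS t (some j)
        have hmul2 :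
            (w i j / (wc + ∑ l, w i l) - w i j / (∑ l, w i l)) * HT w wc S₁ t (some j) ≤
            (w i j / (wc + ∑ l, w i l) - w i j / (∑ l, w i l)) * HT w wc S₂ t (some j) :=
          mul_le_mul_of_nonpos_left hmono (by linarith)
        nlinarith [hmul1, hmul2]
      · by_cases hi1 : i ∈ S₁
        · -- i in all four sets: same coefficient everywhere
          have hi2 : i ∈ S₂ := hS hi1
          have hA : i ∈ insert s S₁ := Finset.mem_insert_of_mem hi1
          have hB : i ∈ insert s S₂ := Finset.mem_insert_of_mem hi2
          simp only [ker, if_pos hA, if_pos hB, if_pos hi1, if_pos hi2]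
          have hmul := mul_le_mul_of_nonneg_left (ih j) hc'
          linarith
        · by_cases hi2 : i ∈ S₂
          · -- i ∈ S₂ \ S₁ : not in insert s S₁, in S₂ and insert s S₂
            have hA : i ∉ insert s S₁ := by
              simp [Finset.mem_insert, his, hi1]
            have hB : i ∈ insert s S₂ := Finset.mem_insert_of_mem hi2
            simp only [ker, if_neg hA, if_pos hB, if_neg hi1, if_pos hi2]
            have hmul1 := mul_le_mul_of_nonneg_left (ih j) hc
            have hmono : HT w wc (insert s S₂) t (some j) ≤ HT w wc S₂ t (some j) :=
              HT_anti w wc hw hwc hd (Finset.subset_insert s S₂) t (some j)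
            have hmul2 :
                (w i j / (∑ l, w i l)) *
                    (HT w wc (insert s S₂) t (some j) - HT w wc S₂ t (some j)) ≤
                (w i j / (wc + ∑ l, w i l)) *
                    (HT w wc (insert s S₂) t (some j) - HT w wc S₂ t (some j)) :=
              mul_le_mul_of_nonpos_right hcc (by linarith)
            nlinarith [hmul1, hmul2]
          · -- i in none of the four sets
            have hA : i ∉ insert s S₁ := by simp [Finset.mem_insert, his, hi1]
            have hB : i ∉ insert s S₂ := by simp [Finset.mem_insert, his, hi2]
            simp only [ker, if_neg hA, if_neg hB, if_neg hi1, if_neg hi2]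
            have hmul := mul_le_mul_of_nonneg_left (ih j) hc
            linarith
    linarith
end

section
/- Define F_AP(S) = (1/n) Σ_{i∈V} p_i^T(S). Under the edge-addition transition model, F_AP is a normalized (F_AP(∅) = 0, assuming no edges to n exist in G), non-decreasing, submodular set function on subsets of V. -/
open Finset

variable {V : Type*}

/- Writing `c = targetWeight wc S i` and `d = ∑ j, w i j`, one step of the chain from `i` gives
`AP S (t+1) i = (c + ∑ k, w i k * AP S t k) / (c + d)`.  Since the numerator never exceeds the
denominator, raising `c` from `0` to `wc` can only raise this ratio: this gives monotonicity.
For submodularity, the four values at `i` pair up into two differences taken at equal `c`, each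
equal to `(∑ k, w i k * Δ k) / (c + d)` for a difference `Δ` one step earlier; the induction
hypothesis compares the numerators, monotonicity makes them nonnegative, and the pairing is
chosen so that the smaller numerator sits over the larger denominator. -/

theorem add_div_add_le_add_div_add {α : Type*} [Field α] [LinearOrder α] [IsStrictOrderedRing α]
    {c₁ c₂ x d : α} (hc₁ : 0 ≤ c₁) (hc : c₁ ≤ c₂) (hx : x ≤ d) (hd : 0 < d) :
    (c₁ + x) / (c₁ + d) ≤ (c₂ + x) / (c₂ + d) := by
  rw [div_le_div_iff₀ (by positivity) (by linarith)]
  nlinarith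

def targetWeight [DecidableEq V] (wc : ℝ) (S : Finset V) (i : V) : ℝ :=
  if i ∈ S then wc else 0

section targetWeight

variable [DecidableEq V] {wc : ℝ} {S S₁ S₂ : Finset V} {i s : V}

theorem targetWeight_nonneg (hwc : 0 ≤ wc) : 0 ≤ targetWeight wc S i := by
  unfold targetWeight; split_ifs <;> simp [hwc]

theorem targetWeight_mono (hwc : 0 ≤ wc) (h : S₁ ⊆ S₂) :
    targetWeight wc S₁ i ≤ targetWeight wc S₂ i := by
  unfold targetWeight; split_ifs <;> simp_all [@h i]

theorem targetWeight_of_notMem (hi : i ∉ S) : targetWeight wc S i = 0 := if_neg hi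

theorem targetWeight_insert_self : targetWeight wc (insert i S) i = wc :=
  if_pos (mem_insert_self i S)

theorem targetWeight_insert_of_ne (h : i ≠ s) :
    targetWeight wc (insert s S) i = targetWeight wc S i := by
  simp [targetWeight, h]

end targetWeight

section AP

variable [Fintype V] [DecidableEq V] {w : V → V → ℝ} {wc : ℝ} {S S₁ S₂ : Finset V}

theorem AP_none (t : ℕ) : AP w wc S t none = 1 := by cases t <;> rfl

theorem AP_succ_some (t : ℕ) (i : V) :
    AP w wc S (t + 1) (some i) =
      (targetWeight wc S i + ∑ k, w i k * AP w wc S t (some k)) /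
        (targetWeight wc S i + ∑ j, w i j) := by
  rw [AP, Fintype.sum_option, AP_none, add_div, sum_div]
  by_cases hi : i ∈ S <;> simp [ker, targetWeight, hi, mul_div_right_comm]

theorem AP_succ_sub_AP_succ {i : V} (h : targetWeight wc S₁ i = targetWeight wc S₂ i)
    (t : ℕ) :
    AP w wc S₁ (t + 1) (some i) - AP w wc S₂ (t + 1) (some i) =
      (∑ k, w i k * (AP w wc S₁ t (some k) - AP w wc S₂ t (some k))) /
        (targetWeight wc S₁ i + ∑ j, w i j) := by
  simp only [AP_succ_some, h, mul_sub, sum_sub_distrib, ← sub_div, add_sub_add_left_eq_sub]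

theorem AP_empty (t : ℕ) (i : V) : AP w wc ∅ t (some i) = 0 := by
  induction t generalizing i with
  | zero => simp [AP]
  | succ t ih => simp [AP_succ_some, targetWeight, ih]

variable (hw : ∀ i j, 0 ≤ w i j) (hwc : 0 ≤ wc)
include hw hwc

theorem AP_le_one (t : ℕ) (x : Option V) : AP w wc S t x ≤ 1 := by
  induction t generalizing x with
  | zero => cases x <;> simp [AP]
  | succ t ih =>
    cases x with
    | none => rw [AP_none]
    | some i =>
      rw [AP_succ_some]
      refine div_le_one_of_le₀ (add_le_add_right ?_ _)
        (add_nonneg (targetWeight_nonneg hwc) (sum_nonneg fun j _ => hw i j))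
      exact sum_le_sum fun k _ => mul_le_of_le_one_right (hw i k) (ih _)

variable (hd : ∀ i, 0 < ∑ j, w i j)
include hd

theorem AP_mono (hS : S₁ ⊆ S₂) (t : ℕ) (x : Option V) :
    AP w wc S₁ t x ≤ AP w wc S₂ t x := by
  induction t generalizing x with
  | zero => rfl
  | succ t ih =>
    cases x with
    | none => rw [AP_none, AP_none]
    | some i =>
      have hsum : ∑ k, w i k * AP w wc S₁ t (some k) ≤ ∑ j, w i j :=
        sum_le_sum fun k _ => mul_le_of_le_one_right (hw i k) (AP_le_one hw hwc t _)
      rw [AP_succ_some, AP_succ_some]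
      calc _ ≤ (targetWeight wc S₂ i + ∑ k, w i k * AP w wc S₁ t (some k)) /
              (targetWeight wc S₂ i + ∑ j, w i j) :=
            add_div_add_le_add_div_add (targetWeight_nonneg hwc) (targetWeight_mono hwc hS) hsum
              (hd i)
        _ ≤ _ := by
            gcongr with k
            · exact add_nonneg (targetWeight_nonneg hwc) (hd i).le
            · exact hw i k
            · exact ih _

theorem AP_insert_sub_le (hS : S₁ ⊆ S₂) {s : V} (hs : s ∉ S₂) (t : ℕ) (x : Option V) :
    AP w wc (insert s S₂) t x - AP w wc S₂ t x ≤
      AP w wc (insert s S₁) t x - AP w wc S₁ t x := by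
  induction t generalizing x with
  | zero => rfl
  | succ t ih =>
    cases x with
    | none => simp only [AP_none, le_refl]
    | some i =>
      by_cases his : i = s
      · subst his
        have hs₁ : i ∉ S₁ := fun h => hs (hS h)
        suffices AP w wc (insert i S₂) (t + 1) (some i) - AP w wc (insert i S₁) (t + 1) (some i)
            ≤ AP w wc S₂ (t + 1) (some i) - AP w wc S₁ (t + 1) (some i) by linarith
        rw [AP_succ_sub_AP_succ (by rw [targetWeight_insert_self, targetWeight_insert_self]),
          AP_succ_sub_AP_succ (by rw [targetWeight_of_notMem hs, targetWeight_of_notMem hs₁]),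
          targetWeight_insert_self, targetWeight_of_notMem hs, zero_add]
        refine div_le_div₀ ?_ ?_ (hd i) (le_add_of_nonneg_left hwc)
        · exact sum_nonneg fun k _ =>
            mul_nonneg (hw i k) (sub_nonneg.2 (AP_mono hw hwc hd hS t _))
        · exact sum_le_sum fun k _ =>
            mul_le_mul_of_nonneg_left (by linarith [ih (some k)]) (hw i k)
      · rw [AP_succ_sub_AP_succ (targetWeight_insert_of_ne his),
          AP_succ_sub_AP_succ (targetWeight_insert_of_ne his)]
        simp only [targetWeight_insert_of_ne his]
        refine div_le_div₀ ?_ ?_ (add_pos_of_nonneg_of_pos (targetWeight_nonneg hwc) (hd i))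
          (add_le_add_left (targetWeight_mono hwc hS) _)
        · exact sum_nonneg fun k _ =>
            mul_nonneg (hw i k) (sub_nonneg.2 (AP_mono hw hwc hd (subset_insert s S₁) t _))
        · exact sum_le_sum fun k _ => mul_le_mul_of_nonneg_left (ih (some k)) (hw i k)

end AP

/-- `F_AP(S) = (1/n) ∑_{i ∈ V} p_i^T(S)` is a normalized, non-decreasing,
submodular set function under the edge-addition transition model. -/
theorem FAP_normalized_monotone_submodular [Fintype V] [DecidableEq V]
    (w : V → V → ℝ) (wc : ℝ) (T : ℕ)
    (hw : ∀ i j, 0 < w i j) (hwc : 0 < wc) (hd : ∀ i, 0 < ∑ j, w i j) :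
    letI FAP : Finset V → ℝ :=
      fun S => (1 / (Fintype.card V : ℝ)) * ∑ i : V, AP w wc S T (some i)
    FAP ∅ = 0 ∧
    (∀ S₁ S₂ : Finset V, S₁ ⊆ S₂ → FAP S₁ ≤ FAP S₂) ∧
    (∀ S₁ S₂ : Finset V, S₁ ⊆ S₂ → ∀ s ∉ S₂,
      FAP (insert s S₂) - FAP S₂ ≤ FAP (insert s S₁) - FAP S₁) := by
  have hw' : ∀ i j, 0 ≤ w i j := fun i j => (hw i j).le
  have hn : (0 : ℝ) ≤ 1 / Fintype.card V := by positivity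
  refine ⟨by simp [AP_empty], fun S₁ S₂ hS => ?_, fun S₁ S₂ hS s hs => ?_⟩
  · exact mul_le_mul_of_nonneg_left (sum_le_sum fun i _ => AP_mono hw' hwc.le hd hS T _) hn
  · simp only [← mul_sub, ← sum_sub_distrib]
    exact mul_le_mul_of_nonneg_left
      (sum_le_sum fun i _ => AP_insert_sub_le hw' hwc.le hd hS hs T _) hn
end

section
/- Define F_HT(S) = (1/n) Σ_{i∈V} h_i^T(S). Under the edge-addition transition model, T − F_HT(S) is a normalized non-decreasing submodular set function, provided h_i^T(∅) = T for all i (i.e., in G no walk reaches n within T steps when S = ∅). -/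
/-!
Let `survival S t i` be the probability that the walk from `i` has not reached the target after
`t` steps. The truncated hitting time is `h_i^T(S) = ∑_{r < T} survival S r i`, so it suffices that
each `S ↦ survival S t i` is nonnegative, antitone and supermodular. This follows by induction on
`t` from `survival S (t+1) i = d_S(i)⁻¹ · ∑_k w i k · survival S t k`, where `d_S(i)` is
`∑_j w i j`, plus `wc` if `i ∈ S`: the factor `d_S(i)⁻¹` depends on `S` only through `i ∈ S`, and a
product of nonnegative, antitone, supermodular set functions is again of that kind.
-/

open Finset

variable {V : Type*}

section Supermodular

variable {α : Type*} [DecidableEq α]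

def Supermodular (f : Finset α → ℝ) : Prop :=
  ∀ ⦃A B : Finset α⦄, A ⊆ B → ∀ s ∉ B, f (insert s A) - f A ≤ f (insert s B) - f B

theorem supermodular_const (c : ℝ) : Supermodular fun _ : Finset α => c := by
  intro A B _ s _
  simp

theorem supermodular_ite_mem (i : α) (a b : ℝ) :
    Supermodular fun S : Finset α => if i ∈ S then a else b := by
  intro A B hAB s hsB
  by_cases hi : i = s
  · subst hi
    have hsA : i ∉ A := fun h => hsB (hAB h)
    simp [hsA, hsB]
  · by_cases hA : i ∈ A <;> by_cases hB : i ∈ B <;> simp [hi, hA, hB]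

theorem antitone_ite_mem (i : α) {a b : ℝ} (hab : a ≤ b) :
    Antitone fun S : Finset α => if i ∈ S then a else b := by
  intro A B hAB
  by_cases hA : i ∈ A
  · simp [hA, hAB hA]
  · by_cases hB : i ∈ B <;> simp [hA, hB, hab]

theorem Supermodular.const_mul {f : Finset α → ℝ} (hf : Supermodular f) {c : ℝ} (hc : 0 ≤ c) :
    Supermodular fun S => c * f S := by
  intro A B hAB s hsB
  simpa only [← mul_sub] using mul_le_mul_of_nonneg_left (hf hAB s hsB) hc

theorem Supermodular.sum {ι : Type*} (I : Finset ι) {f : ι → Finset α → ℝ}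
    (hf : ∀ k ∈ I, Supermodular (f k)) : Supermodular fun S => ∑ k ∈ I, f k S := by
  intro A B hAB s hsB
  simp only [← Finset.sum_sub_distrib]
  exact Finset.sum_le_sum fun k hk => hf k hk hAB s hsB

/-- Marginal gains of `f * g` split as `f (A ∪ {s}) Δg(A) + g(A) Δf(A)`; each term grows with
`A` because the marginals are nonpositive and nondecreasing while the factors are nonnegative and
nonincreasing. -/
theorem Supermodular.mul {f g : Finset α → ℝ} (hf : Supermodular f) (hg : Supermodular g)
    (hf₀ : 0 ≤ f) (hg₀ : 0 ≤ g) (hf_anti : Antitone f) (hg_anti : Antitone g) :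
    Supermodular fun S => f S * g S := by
  intro A B hAB s hsB
  have hAs : A ⊆ insert s A := subset_insert s A
  have hABs : insert s A ⊆ insert s B := insert_subset_insert s hAB
  linarith [mul_le_mul_of_nonneg_left (hg hAB s hsB) (hf₀ (insert s B)),
    mul_le_mul_of_nonneg_left (hf hAB s hsB) (hg₀ B),
    mul_le_mul_of_nonpos_right (hf_anti hABs) (sub_nonpos.2 (hg_anti hAs)),
    mul_le_mul_of_nonpos_right (hg_anti hAB) (sub_nonpos.2 (hf_anti hAs))]

end Supermodular

section HittingTime

variable [Fintype V] [DecidableEq V] (w : V → V → ℝ) (wc : ℝ)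

noncomputable def survival (S : Finset V) : ℕ → V → ℝ
  | 0, _ => 1
  | t + 1, i => ∑ k, ker w wc S (some i) (some k) * survival S t k

theorem HT_none (S : Finset V) : ∀ t, HT w wc S t none = 0
  | 0 => rfl
  | _ + 1 => rfl

theorem HT_some_eq_sum_survival (S : Finset V) (t : ℕ) (i : V) :
    HT w wc S t (some i) = ∑ r ∈ range t, survival w wc S r i := by
  induction t generalizing i with
  | zero => rfl
  | succ t ih =>
    calc HT w wc S (t + 1) (some i)
        = 1 + ∑ k, ker w wc S (some i) (some k) * ∑ r ∈ range t, survival w wc S r k := by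
          simp only [HT, Fintype.sum_option, HT_none, mul_zero, zero_add, ih]
      _ = 1 + ∑ r ∈ range t, survival w wc S (r + 1) i := by
          simp only [Finset.mul_sum, survival]
          rw [Finset.sum_comm]
      _ = ∑ r ∈ range (t + 1), survival w wc S r i := by
          rw [sum_range_succ', add_comm]
          rfl

theorem survival_succ (S : Finset V) (t : ℕ) (i : V) :
    survival w wc S (t + 1) i =
      (if i ∈ S then (wc + ∑ j, w i j)⁻¹ else (∑ j, w i j)⁻¹) *
        ∑ k, w i k * survival w wc S t k := by
  rw [survival, Finset.mul_sum]
  refine Finset.sum_congr rfl fun k _ => ?_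
  by_cases hi : i ∈ S <;> simp only [ker, hi, if_true, if_false] <;> ring

variable {w wc}

theorem survival_nonneg_antitone_supermodular (hw : ∀ i j, 0 ≤ w i j) (hwc : 0 ≤ wc)
    (hd : ∀ i, 0 < ∑ j, w i j) (t : ℕ) (i : V) :
    letI q : Finset V → ℝ := fun S => survival w wc S t i
    0 ≤ q ∧ Antitone q ∧ Supermodular q := by
  induction t generalizing i with
  | zero => exact ⟨fun _ => zero_le_one, antitone_const, supermodular_const 1⟩
  | succ t ih =>
    set f : Finset V → ℝ := fun S => if i ∈ S then (wc + ∑ j, w i j)⁻¹ else (∑ j, w i j)⁻¹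
    set g : Finset V → ℝ := fun S => ∑ k, w i k * survival w wc S t k
    have hf₀ : 0 ≤ f := fun S => by
      have := hd i
      dsimp only [f]
      split_ifs <;> positivity
    have hg₀ : 0 ≤ g := fun S => sum_nonneg fun k _ => mul_nonneg (hw i k) ((ih k).1 S)
    have hf_anti : Antitone f :=
      antitone_ite_mem i (inv_anti₀ (hd i) (le_add_of_nonneg_left hwc))
    have hg_anti : Antitone g := fun A B hAB =>
      sum_le_sum fun k _ => mul_le_mul_of_nonneg_left ((ih k).2.1 hAB) (hw i k)
    have hg_sup : Supermodular g :=
      Supermodular.sum _ fun k _ => (ih k).2.2.const_mul (hw i k)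
    simp only [survival_succ]
    exact ⟨fun S => mul_nonneg (hf₀ S) (hg₀ S),
      fun A B hAB => mul_le_mul (hf_anti hAB) (hg_anti hAB) (hg₀ B) (hf₀ A),
      (supermodular_ite_mem i _ _).mul hg_sup hf₀ hg₀ hf_anti hg_anti⟩

end HittingTime

/-- If no walk reaches the target within `T` steps when `S = ∅`, then
`T − F_HT(S)` is a normalized, non-decreasing, submodular set function
under the edge-addition transition model. -/
theorem T_sub_FHT_normalized_monotone_submodular [Fintype V] [Nonempty V] [DecidableEq V]
    (w : V → V → ℝ) (wc : ℝ) (T : ℕ)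
    (hw : ∀ i j, 0 < w i j) (hwc : 0 < wc) (hd : ∀ i, 0 < ∑ j, w i j)
    (hfull : ∀ i : V, HT w wc ∅ T (some i) = (T : ℝ)) :
    letI G : Finset V → ℝ :=
      fun S => (T : ℝ) - (1 / (Fintype.card V : ℝ)) * ∑ i : V, HT w wc S T (some i)
    G ∅ = 0 ∧
    (∀ S₁ S₂ : Finset V, S₁ ⊆ S₂ → G S₁ ≤ G S₂) ∧
    (∀ S₁ S₂ : Finset V, S₁ ⊆ S₂ → ∀ s ∉ S₂,
      G (insert s S₂) - G S₂ ≤ G (insert s S₁) - G S₁) := by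
  set c : ℝ := 1 / (Fintype.card V : ℝ)
  set F : Finset V → ℝ := fun S => ∑ i : V, HT w wc S T (some i)
  have hc : 0 ≤ c := by positivity
  have hq := survival_nonneg_antitone_supermodular (fun i j => (hw i j).le) hwc.le hd
  have hF_anti : Antitone F := fun A B hAB => by
    simp only [F, HT_some_eq_sum_survival]
    exact sum_le_sum fun i _ => sum_le_sum fun r _ => (hq r i).2.1 hAB
  have hF_sup : Supermodular fun S => c * F S := by
    simp only [F, HT_some_eq_sum_survival]
    exact (Supermodular.sum _ fun i _ => Supermodular.sum _ fun r _ => (hq r i).2.2).const_mul hc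
  refine ⟨?_, fun S₁ S₂ hS => ?_, fun S₁ S₂ hS s hs => ?_⟩
  · simp only [hfull, sum_const, card_univ, nsmul_eq_mul, c]
    field_simp
    ring
  · exact sub_le_sub_left (mul_le_mul_of_nonneg_left (hF_anti hS) hc) _
  · linarith [hF_sup hS s hs]
end
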